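/- Let y_1, …, y_n be nonzero vectors in ℝ^q, let c′ > 0, and let μ > 1 + c′·n. Then the map G has a fixed point in D = {S symmetric : I ⪯ S ⪯ μI}, i.e., there exists a symmetric matrix S* with I ⪯ S* ⪯ μI and G(S*) = S*. -/

import Mathlib

open Matrix Classical

/-- Principal (symmetric positive semidefinite) square root of a matrix;
junk value `0` if the matrix is not positive semidefinite. -/
noncomputable def matSqrt {q : ℕ} (A : Matrix (Fin q) (Fin q) ℝ) : Matrix (Fin q) (Fin q) ℝ :=
  if h : A.PosSemidef then
    (h.1.eigenvectorUnitary : Matrix (Fin q) (Fin q) ℝ) *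
      diagonal ((↑) ∘ (fun x : ℝ => √x) ∘ h.1.eigenvalues) *
      (star h.1.eigenvectorUnitary : Matrix (Fin q) (Fin q) ℝ)
  else 0

/-- Loewner order: `loewnerLE A B` iff `B - A` is positive semidefinite. -/
def loewnerLE {q : ℕ} (A B : Matrix (Fin q) (Fin q) ℝ) : Prop := (B - A).PosSemidef

/-- Largest eigenvalue of a (Hermitian) matrix; junk value `0` otherwise. -/
noncomputable def maxEig {q : ℕ} (A : Matrix (Fin q) (Fin q) ℝ) : ℝ :=
  if h : A.IsHermitian then ⨆ i, h.eigenvalues i else 0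

/-- Smallest eigenvalue of a (Hermitian) matrix; junk value `0` otherwise. -/
noncomputable def minEig {q : ℕ} (A : Matrix (Fin q) (Fin q) ℝ) : ℝ :=
  if h : A.IsHermitian then ⨅ i, h.eigenvalues i else 0

/-- The matrix `Y` whose columns are the `y i`. -/
def Ymat {q n : ℕ} (y : Fin n → (Fin q → ℝ)) : Matrix (Fin q) (Fin n) ℝ :=
  Matrix.of fun i j => y j i

/-- The map `G(S) = I + c' · S^(1/2) Y D_S Yᵀ S^(1/2)`, where `D_S` is diagonal
with entries `1 / (yᵢᵀ S yᵢ)`. -/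
noncomputable def Gmap {q n : ℕ} (y : Fin n → (Fin q → ℝ)) (c' : ℝ)
    (S : Matrix (Fin q) (Fin q) ℝ) : Matrix (Fin q) (Fin q) ℝ :=
  1 + c' • (matSqrt S * Ymat y * Matrix.diagonal (fun i => (y i ⬝ᵥ S *ᵥ y i)⁻¹)
      * (Ymat y)ᵀ * matSqrt S)

/-!
For positive definite `S`, `G(S) = S` is equivalent to the vanishing of `S⁻¹ - I + c' Y D_S Yᵀ`,
the gradient of the potential `f(S) = log det S - tr S + c' ∑ᵢ log (yᵢᵀ S yᵢ)`.
Since `log λ - λ ≤ -1`, every eigenvalue `λ` of a positive definite `S ⪯ R I` satisfies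
`f(S) ≤ f(I) + (log λ - λ + 1) + c' n log R`. Hence, for `R` large and `δ` small, a maximiser of
`f` on the compact Loewner interval `δ I ⪯ S ⪯ R I` has its spectrum in `[2δ, R/2]`, so it is an
interior point, its gradient vanishes, and it is a fixed point of `G`.
At a fixed point `S - I = c' S^(1/2) Y D_S Yᵀ S^(1/2) ⪰ 0` and `tr S = q + c' n`, so the
eigenvalues of `S` lie in `[1, 1 + c' n]`.
-/

open scoped MatrixOrder Topology

namespace Matrix

section

variable {ι : Type*}

lemma posDef_of_smul_one_le [DecidableEq ι] {S : Matrix ι ι ℝ} {δ : ℝ} (hδ : 0 < δ)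
    (h : δ • 1 ≤ S) : S.PosDef := by
  simpa using (PosDef.one.smul hδ).add_posSemidef (le_iff.mp h)

variable [Fintype ι]

lemma isClosed_setOf_posSemidef : IsClosed {A : Matrix ι ι ℝ | A.PosSemidef} := by
  simp only [posSemidef_iff_dotProduct_mulVec, Set.ofPred_and, Set.ofPred_forall]
  refine .inter (isClosed_eq continuous_id.matrix_conjTranspose continuous_id)
    (isClosed_iInter fun x => isClosed_le continuous_const ?_)
  fun_prop

variable [DecidableEq ι]

lemma PosSemidef.two_mul_abs_apply_le {A : Matrix ι ι ℝ} (hA : A.PosSemidef) (i j : ι) :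
    2 * |A i j| ≤ A i i + A j j := by
  have hsymm : A j i = A i j := by simpa using congrFun (congrFun hA.1 i) j
  have hquad (s : ℝ) : 0 ≤ A i i + 2 * s * A i j + s ^ 2 * A j j := by
    have := hA.dotProduct_mulVec_nonneg (Pi.single i 1 + Pi.single j s)
    simp only [star_trivial, mulVec_add, mulVec_single, MulOpposite.op_one, one_smul,
      op_smul_eq_smul, dotProduct_add, add_dotProduct, single_dotProduct, col_apply, one_mul, hsymm,
      dotProduct_smul, smul_eq_mul] at this
    linarith
  have h1 := hquad 1
  have h2 := hquad (-1)
  have : |A i j| ≤ (A i i + A j j) / 2 := abs_le.mpr ⟨by linarith, by linarith⟩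
  linarith

lemma isCompact_Icc_smul_one (a b : ℝ) :
    IsCompact (Set.Icc (a • 1 : Matrix ι ι ℝ) (b • 1)) := by
  have hclosed : IsClosed (Set.Icc (a • 1 : Matrix ι ι ℝ) (b • 1)) :=
    (isClosed_setOf_posSemidef.preimage (continuous_id.sub continuous_const)).inter
      (isClosed_setOf_posSemidef.preimage (continuous_const.sub continuous_id))
  refine (isCompact_univ_pi fun _ => isCompact_univ_pi fun _ =>
    isCompact_Icc (a := -(|a| + |b|)) (b := |a| + |b|)).of_isClosed_subset hclosed ?_
  rintro (S : Matrix ι ι ℝ) ⟨haS, hSb⟩ i - j -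
  have hdiag (k : ι) : a ≤ S k k ∧ S k k ≤ b := by
    have h1 := (le_iff.mp haS).diag_nonneg (i := k)
    have h2 := (le_iff.mp hSb).diag_nonneg (i := k)
    simp only [sub_apply, smul_apply, one_apply_eq, smul_eq_mul, mul_one] at h1 h2
    constructor <;> linarith
  rw [Set.mem_Icc, ← abs_le]
  obtain rfl | hij := eq_or_ne i j
  · obtain ⟨h1, h2⟩ := hdiag i
    exact (abs_le_max_abs_abs h1 h2).trans (max_le_add_of_nonneg (abs_nonneg a) (abs_nonneg b))
  · have hoff := (le_iff.mp haS).two_mul_abs_apply_le i j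
    simp only [sub_apply, smul_apply, one_apply_eq, one_apply_ne hij, smul_eq_mul, mul_one,
      mul_zero, sub_zero] at hoff
    linarith [hdiag i, hdiag j, neg_abs_le a, le_abs_self b]

lemma smul_one_le_smul_one {a b : ℝ} (h : a ≤ b) : (a • 1 : Matrix ι ι ℝ) ≤ b • 1 :=
  smul_le_smul_of_nonneg_right h zero_le_one

lemma IsHermitian.smul_one_le_iff {S : Matrix ι ι ℝ} (hS : S.IsHermitian) {a : ℝ} :
    a • 1 ≤ S ↔ ∀ j, a ≤ hS.eigenvalues j := by
  rw [← Algebra.algebraMap_eq_smul_one, algebraMap_le_iff_le_spectrum hS.isSelfAdjoint,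
    hS.spectrum_real_eq_range_eigenvalues, Set.forall_mem_range]

lemma IsHermitian.le_smul_one_iff {S : Matrix ι ι ℝ} (hS : S.IsHermitian) {a : ℝ} :
    S ≤ a • 1 ↔ ∀ j, hS.eigenvalues j ≤ a := by
  rw [← Algebra.algebraMap_eq_smul_one, le_algebraMap_iff_spectrum_le hS.isSelfAdjoint,
    hS.spectrum_real_eq_range_eigenvalues, Set.forall_mem_range]

lemma IsHermitian.le_smul_one_of_one_le {S : Matrix ι ι ℝ} (hS : S.IsHermitian) (h1 : 1 ≤ S) :
    S ≤ (S.trace - Fintype.card ι + 1) • 1 := by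
  rw [← one_smul ℝ (1 : Matrix ι ι ℝ), hS.smul_one_le_iff] at h1
  refine hS.le_smul_one_iff.mpr fun k => ?_
  have hsum : hS.eigenvalues k - 1 ≤ ∑ j, (hS.eigenvalues j - 1) :=
    Finset.single_le_sum (f := fun j => hS.eigenvalues j - 1) (fun j _ => sub_nonneg.mpr (h1 j))
      (Finset.mem_univ k)
  rw [hS.trace_eq_sum_eigenvalues]
  simp only [Finset.sum_sub_distrib, Finset.sum_const, Finset.card_univ, nsmul_eq_mul, mul_one,
    Real.ringHom_apply] at hsum ⊢
  linarith

lemma IsHermitian.eventually_smul_le_smul_one {H : Matrix ι ι ℝ} (hH : H.IsHermitian) {ε : ℝ}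
    (hε : 0 < ε) : ∀ᶠ t in 𝓝 (0 : ℝ), t • H ≤ ε • 1 := by
  set β := 1 + ∑ j, |hH.eigenvalues j|
  have habs (j : ι) : |hH.eigenvalues j| ≤ β :=
    le_add_of_nonneg_of_le zero_le_one (Finset.single_le_sum (f := fun j => |hH.eigenvalues j|)
      (fun j _ => abs_nonneg _) (Finset.mem_univ j))
  have hβ : 0 < β := by positivity
  have hHβ : H ≤ β • 1 := hH.le_smul_one_iff.mpr fun j => (le_abs_self _).trans (habs j)
  have hnegHβ : -H ≤ β • 1 := by
    rw [neg_le, ← neg_smul]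
    exact hH.smul_one_le_iff.mpr fun j => neg_le.mp ((neg_le_abs _).trans (habs j))
  filter_upwards [Metric.ball_mem_nhds 0 (div_pos hε hβ)] with t ht
  rw [Metric.mem_ball, dist_zero_right, Real.norm_eq_abs, lt_div_iff₀ hβ] at ht
  rcases le_total 0 t with ht0 | ht0
  · calc t • H ≤ t • (β • 1) := smul_le_smul_of_nonneg_left hHβ ht0
      _ = (|t| * β) • 1 := by rw [abs_of_nonneg ht0, smul_smul]
      _ ≤ ε • 1 := smul_one_le_smul_one ht.le
  · calc t • H = (-t) • -H := by rw [neg_smul_neg]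
      _ ≤ (-t) • (β • 1) := smul_le_smul_of_nonneg_left hnegHβ (neg_nonneg.mpr ht0)
      _ = (|t| * β) • 1 := by rw [abs_of_nonpos ht0, smul_smul]
      _ ≤ ε • 1 := smul_one_le_smul_one ht.le

lemma eventually_add_smul_mem_Icc {S H : Matrix ι ι ℝ} (hH : H.IsHermitian) {a b ε : ℝ}
    (hε : 0 < ε) (haS : (a + ε) • 1 ≤ S) (hSb : S ≤ (b - ε) • 1) :
    ∀ᶠ t in 𝓝 (0 : ℝ), S + t • H ∈ Set.Icc (a • 1) (b • 1) := by
  filter_upwards [hH.eventually_smul_le_smul_one hε, hH.neg.eventually_smul_le_smul_one hε]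
    with t hle hge
  rw [smul_neg, neg_le] at hge
  constructor
  · calc a • 1 = (a + ε) • 1 + -(ε • 1) := by module
      _ ≤ S + t • H := add_le_add haS hge
  · calc S + t • H ≤ (b - ε) • 1 + ε • 1 := add_le_add hSb hle
      _ = b • 1 := by module

open Polynomial in
lemma hasDerivAt_det_one_add_smul (M : Matrix ι ι ℝ) :
    HasDerivAt (fun t : ℝ => (1 + t • M).det) M.trace 0 := by
  have hpoly : (fun t : ℝ => (1 + t • M).det) =
      fun t => (det (1 + (X : ℝ[X]) • M.map C)).eval t := by
    ext t
    simp [eval_det, ← smul_eq_mul_diagonal]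
  rw [hpoly, ← derivative_det_one_add_X_smul]
  exact Polynomial.hasDerivAt _ 0

lemma hasDerivAt_log_det_add_smul {S : Matrix ι ι ℝ} (hS : S.det ≠ 0) (H : Matrix ι ι ℝ) :
    HasDerivAt (fun t : ℝ => Real.log (S + t • H).det) (S⁻¹ * H).trace 0 := by
  have hfactor (t : ℝ) : (S + t • H).det = S.det * (1 + t • (S⁻¹ * H)).det := by
    rw [← det_mul, Matrix.mul_add, Matrix.mul_one, Matrix.mul_smul, ← Matrix.mul_assoc,
      mul_nonsing_inv _ (isUnit_iff_ne_zero.mpr hS), Matrix.one_mul]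
  simp_rw [hfactor]
  convert ((hasDerivAt_det_one_add_smul (S⁻¹ * H)).const_mul S.det).log (by simpa using hS)
    using 1
  rw [zero_smul, add_zero, det_one, mul_one, mul_div_cancel_left₀ _ hS]

end

end Matrix

lemma exists_mul_log_sub_half_lt {a : ℝ} (ha : 0 ≤ a) :
    ∃ R : ℝ, 2 ≤ R ∧ a * Real.log R - R / 2 < -1 := by
  refine ⟨(4 * a + 2) ^ 2, by nlinarith, ?_⟩
  have hlog : Real.log ((4 * a + 2) ^ 2) ≤ 2 * (4 * a + 2 - 1) := by
    rw [Real.log_pow]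
    push_cast
    linarith [Real.log_le_sub_one_of_pos (x := 4 * a + 2) (by positivity)]
  nlinarith [mul_le_mul_of_nonneg_left hlog ha]

lemma exists_log_two_mul_lt (b : ℝ) :
    ∃ δ : ℝ, 0 < δ ∧ δ ≤ 1 / 2 ∧ Real.log (2 * δ) < b := by
  refine ⟨min (1 / 2) (Real.exp b / 4), by positivity, min_le_left _ _, ?_⟩
  calc Real.log (2 * min (1 / 2) (Real.exp b / 4)) ≤ Real.log (Real.exp b / 2) :=
        Real.log_le_log (by positivity) (by linarith [min_le_right (1 / 2) (Real.exp b / 4)])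
    _ < b := by
        rw [Real.log_div (Real.exp_pos b).ne' two_ne_zero, Real.log_exp]
        linarith [Real.log_pos one_lt_two]

lemma matSqrt_eq_sqrt {q : ℕ} {A : Matrix (Fin q) (Fin q) ℝ} (hA : A.PosSemidef) :
    matSqrt A = CFC.sqrt A := by
  rw [matSqrt, dif_pos hA, CFC.sqrt_eq_real_sqrt A hA.nonneg, cfcₙ_eq_cfc, hA.1.cfc_eq,
    IsHermitian.cfc, Unitary.conjStarAlgAut_apply]
  rfl

lemma trace_Ymat_mul_diagonal_mul_transpose_mul {q n : ℕ} (y : Fin n → Fin q → ℝ)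
    (d : Fin n → ℝ) (H : Matrix (Fin q) (Fin q) ℝ) :
    (Ymat y * diagonal d * (Ymat y)ᵀ * H).trace = ∑ i, d i * (y i ⬝ᵥ H *ᵥ y i) := by
  rw [trace_mul_cycle, trace_mul_comm]
  simp only [trace, diag, mul_apply, diagonal_apply, transpose_apply, Ymat, of_apply, dotProduct,
    mulVec, Finset.mul_sum, mul_ite, mul_zero, Finset.sum_ite_eq', Finset.mem_univ, if_true]
  exact Finset.sum_congr rfl fun i _ => Finset.sum_congr rfl fun j _ =>
    Finset.sum_congr rfl fun k _ => by ring

namespace Gmap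

variable {q n : ℕ} (y : Fin n → Fin q → ℝ) (c' : ℝ)

noncomputable def scatter (S : Matrix (Fin q) (Fin q) ℝ) : Matrix (Fin q) (Fin q) ℝ :=
  Ymat y * diagonal (fun i => (y i ⬝ᵥ S *ᵥ y i)⁻¹) * (Ymat y)ᵀ

noncomputable def potential (S : Matrix (Fin q) (Fin q) ℝ) : ℝ :=
  Real.log S.det - S.trace + c' * ∑ i, Real.log (y i ⬝ᵥ S *ᵥ y i)

noncomputable def potentialGrad (S : Matrix (Fin q) (Fin q) ℝ) : Matrix (Fin q) (Fin q) ℝ :=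
  S⁻¹ - 1 + c' • scatter y S

lemma posSemidef_scatter {S : Matrix (Fin q) (Fin q) ℝ} (hS : S.PosSemidef) :
    (scatter y S).PosSemidef := by
  have hD : (diagonal fun i => (y i ⬝ᵥ S *ᵥ y i)⁻¹).PosSemidef :=
    .diagonal fun i => inv_nonneg.mpr (by simpa using hS.dotProduct_mulVec_nonneg (y i))
  simpa [scatter, conjTranspose_eq_transpose_of_trivial] using
    hD.mul_mul_conjTranspose_same (Ymat y)

lemma eq_one_add_sqrt_mul_scatter_mul_sqrt {S : Matrix (Fin q) (Fin q) ℝ} (hS : S.PosSemidef) :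
    Gmap y c' S = 1 + c' • (CFC.sqrt S * scatter y S * CFC.sqrt S) := by
  rw [Gmap, matSqrt_eq_sqrt hS, scatter]
  simp only [Matrix.mul_assoc]

lemma eq_self_of_potentialGrad_eq_zero {S : Matrix (Fin q) (Fin q) ℝ} (hS : S.PosDef)
    (hgrad : potentialGrad y c' S = 0) : Gmap y c' S = S := by
  set Q := CFC.sqrt S
  have hQQ : Q * Q = S := CFC.sqrt_mul_sqrt_self S hS.posSemidef.nonneg
  have hQinvQ : Q * S⁻¹ * Q = 1 := mul_eq_one_comm.mp <| by
    rw [← Matrix.mul_assoc, hQQ, mul_nonsing_inv _ (isUnit_iff_ne_zero.mpr hS.det_pos.ne')]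
  have hscatter : c' • scatter y S = 1 - S⁻¹ := by
    calc c' • scatter y S = potentialGrad y c' S + (1 - S⁻¹) := by rw [potentialGrad]; abel
      _ = 1 - S⁻¹ := by rw [hgrad, zero_add]
  rw [eq_one_add_sqrt_mul_scatter_mul_sqrt y c' hS.posSemidef, ← Matrix.smul_mul,
    ← Matrix.mul_smul, hscatter, Matrix.mul_sub, Matrix.sub_mul, Matrix.mul_one, hQQ, hQinvQ]
  abel

lemma continuousAt_potential {S : Matrix (Fin q) (Fin q) ℝ} (hdet : S.det ≠ 0)
    (hP : ∀ i, y i ⬝ᵥ S *ᵥ y i ≠ 0) : ContinuousAt (potential y c') S := by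
  have hquad (i : Fin n) : Continuous fun T : Matrix (Fin q) (Fin q) ℝ => y i ⬝ᵥ T *ᵥ y i :=
    continuous_const.dotProduct (continuous_id.matrix_mulVec continuous_const)
  exact ((continuous_id.matrix_det.continuousAt.log hdet).sub
    continuous_id.matrix_trace.continuousAt).add (continuousAt_const.mul
      (tendsto_finsetSum _ fun i _ => (hquad i).continuousAt.log (hP i)))

lemma hasDerivAt_potential_add_smul {S : Matrix (Fin q) (Fin q) ℝ} (hdet : S.det ≠ 0)
    (hP : ∀ i, y i ⬝ᵥ S *ᵥ y i ≠ 0) (H : Matrix (Fin q) (Fin q) ℝ) :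
    HasDerivAt (fun t : ℝ => potential y c' (S + t • H))
      (potentialGrad y c' S * H).trace 0 := by
  have haffine (a b : ℝ) : HasDerivAt (fun t : ℝ => a + t * b) b 0 := by
    simpa using ((hasDerivAt_id (0 : ℝ)).mul_const b).const_add a
  have htrace : HasDerivAt (fun t : ℝ => (S + t • H).trace) H.trace 0 := by
    simpa [trace_add, trace_smul] using haffine S.trace H.trace
  have hquad (i : Fin n) : HasDerivAt (fun t : ℝ => Real.log (y i ⬝ᵥ (S + t • H) *ᵥ y i))
      ((y i ⬝ᵥ H *ᵥ y i) / (y i ⬝ᵥ S *ᵥ y i)) 0 := by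
    simpa [add_mulVec, smul_mulVec, dotProduct_add] using
      (haffine (y i ⬝ᵥ S *ᵥ y i) (y i ⬝ᵥ H *ᵥ y i)).log (by simpa using hP i)
  refine (((hasDerivAt_log_det_add_smul hdet H).sub htrace).add
    ((HasDerivAt.fun_sum fun i _ => hquad i).const_mul c')).congr_deriv ?_
  rw [potentialGrad, scatter, Matrix.add_mul, Matrix.sub_mul, Matrix.one_mul, Matrix.smul_mul,
    trace_add, trace_sub, trace_smul, trace_Ymat_mul_diagonal_mul_transpose_mul]
  simp [div_eq_inv_mul]

lemma potentialGrad_eq_zero_of_isLocalMax {S : Matrix (Fin q) (Fin q) ℝ} (hS : S.PosDef)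
    (hy : ∀ i, y i ≠ 0)
    (hmax : ∀ H, H.IsHermitian → IsLocalMax (fun t : ℝ => potential y c' (S + t • H)) 0) :
    potentialGrad y c' S = 0 := by
  have hP (i : Fin n) : y i ⬝ᵥ S *ᵥ y i ≠ 0 := by
    simpa using (hS.dotProduct_mulVec_pos (hy i)).ne'
  have hherm : (potentialGrad y c' S).IsHermitian :=
    (hS.inv.isHermitian.sub isHermitian_one).add
      ((posSemidef_scatter y hS.posSemidef).isHermitian.smul (.all c'))
  have htrace := (hmax _ hherm).hasDerivAt_eq_zero
    (hasDerivAt_potential_add_smul y c' hS.det_pos.ne' hP _)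
  exact trace_conjTranspose_mul_self_eq_zero_iff.mp (by rwa [hherm.eq])

lemma potential_one : potential y c' 1 = -q + c' * ∑ i, Real.log (y i ⬝ᵥ y i) := by
  simp [potential]

lemma potential_le_potential_one_add {S : Matrix (Fin q) (Fin q) ℝ} (hS : S.PosDef) {R : ℝ}
    (hR : 0 < R) (hSR : S ≤ R • 1) (hy : ∀ i, y i ≠ 0) (hc' : 0 ≤ c') (k : Fin q) :
    potential y c' S ≤ potential y c' 1 +
      (Real.log (hS.1.eigenvalues k) - hS.1.eigenvalues k + 1) + c' * n * Real.log R := by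
  set eig := hS.1.eigenvalues
  have hlogdet : Real.log S.det = ∑ j, Real.log (eig j) := by
    rw [hS.1.det_eq_prod_eigenvalues]
    simpa using Real.log_prod (fun j _ => (hS.eigenvalues_pos j).ne')
  have htrace : S.trace = ∑ j, eig j := by simpa using hS.1.trace_eq_sum_eigenvalues
  have hspectral : ∑ j, (Real.log (eig j) - eig j + 1) ≤ Real.log (eig k) - eig k + 1 := by
    have hnonpos (j : Fin q) : Real.log (eig j) - eig j + 1 ≤ 0 := by
      linarith [Real.log_le_sub_one_of_pos (hS.eigenvalues_pos j)]
    have := Finset.single_le_sum (f := fun j => -(Real.log (eig j) - eig j + 1))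
      (fun j _ => neg_nonneg.mpr (hnonpos j)) (Finset.mem_univ k)
    rwa [Finset.sum_neg_distrib, neg_le_neg_iff] at this
  have hquad (i : Fin n) :
      Real.log (y i ⬝ᵥ S *ᵥ y i) ≤ Real.log R + Real.log (y i ⬝ᵥ y i) := by
    have hpos : 0 < y i ⬝ᵥ S *ᵥ y i := by simpa using hS.dotProduct_mulVec_pos (hy i)
    have hle : y i ⬝ᵥ S *ᵥ y i ≤ R * (y i ⬝ᵥ y i) := by
      have := (le_iff.mp hSR).dotProduct_mulVec_nonneg (y i)
      simp only [star_trivial, sub_mulVec, smul_mulVec, one_mulVec, dotProduct_sub,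
        dotProduct_smul, smul_eq_mul, sub_nonneg] at this
      linarith
    have hnorm : 0 < y i ⬝ᵥ y i := by simpa using dotProduct_self_star_pos_iff.mpr (hy i)
    rw [← Real.log_mul hR.ne' hnorm.ne']
    exact Real.log_le_log hpos hle
  have hsum : c' * ∑ i, Real.log (y i ⬝ᵥ S *ᵥ y i) ≤
      c' * ∑ i, (Real.log R + Real.log (y i ⬝ᵥ y i)) :=
    mul_le_mul_of_nonneg_left (Finset.sum_le_sum fun i _ => hquad i) hc'
  simp only [Finset.sum_add_distrib, Finset.sum_sub_distrib, Finset.sum_const, Finset.card_univ,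
    Fintype.card_fin, nsmul_eq_mul, mul_one] at hsum hspectral
  rw [potential, potential_one, hlogdet, htrace]
  linarith

lemma mem_Icc_of_potential_one_le (hc' : 0 ≤ c') (hy : ∀ i, y i ≠ 0)
    {S : Matrix (Fin q) (Fin q) ℝ} (hS : S.PosDef) {δ R : ℝ} (hR : 0 < R) (hSR : S ≤ R • 1)
    (hRlarge : (1 + c' * n) * Real.log R - R / 2 < -1)
    (hδsmall : Real.log (2 * δ) + c' * n * Real.log R < -1)
    (hpot : potential y c' 1 ≤ potential y c' S) :
    S ∈ Set.Icc ((2 * δ) • 1) ((R / 2) • 1) := by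
  have hbound (k : Fin q) :=
    hpot.trans (potential_le_potential_one_add y c' hS hR hSR hy hc' k)
  have heigR (k : Fin q) : hS.1.eigenvalues k ≤ R := hS.1.le_smul_one_iff.mp hSR k
  refine ⟨hS.1.smul_one_le_iff.mpr fun k => ?_, hS.1.le_smul_one_iff.mpr fun k => ?_⟩
  all_goals
    have hpos := hS.eigenvalues_pos k
    have := hbound k
    by_contra! hk
  · linarith [Real.log_le_log hpos hk.le]
  · linarith [Real.log_le_log hpos (heigR k), heigR k]

lemma exists_posDef_isLocalMax_potential (hc' : 0 ≤ c') (hy : ∀ i, y i ≠ 0) :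
    ∃ S : Matrix (Fin q) (Fin q) ℝ, S.PosDef ∧
      ∀ H, H.IsHermitian → IsLocalMax (fun t : ℝ => potential y c' (S + t • H)) 0 := by
  obtain ⟨R, hR, hRlarge⟩ := exists_mul_log_sub_half_lt (a := 1 + c' * n) (by positivity)
  obtain ⟨δ, hδ, hδhalf, hδsmall⟩ := exists_log_two_mul_lt (-1 - c' * n * Real.log R)
  have h1 : (1 : Matrix (Fin q) (Fin q) ℝ) ∈ Set.Icc (δ • 1) (R • 1) := by
    constructor
    · simpa using smul_one_le_smul_one (ι := Fin q) (by linarith : δ ≤ 1)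
    · simpa using smul_one_le_smul_one (ι := Fin q) (by linarith : 1 ≤ R)
  have hpd (S : Matrix (Fin q) (Fin q) ℝ) (hS : S ∈ Set.Icc (δ • 1) (R • 1)) : S.PosDef :=
    posDef_of_smul_one_le hδ hS.1
  obtain ⟨S, hSK, hmax⟩ := (isCompact_Icc_smul_one δ R).exists_isMaxOn ⟨1, h1⟩
    fun S hS => (continuousAt_potential y c' (hpd S hS).det_pos.ne'
      fun i => by simpa using ((hpd S hS).dotProduct_mulVec_pos (hy i)).ne').continuousWithinAt
  obtain ⟨hδS, hSR⟩ := mem_Icc_of_potential_one_le y c' hc' hy (hpd S hSK) (by linarith) hSK.2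
    hRlarge (by linarith) (hmax h1)
  refine ⟨S, hpd S hSK, fun H hH => ?_⟩
  have hSR' : S ≤ (R - δ) • 1 := hSR.trans (smul_one_le_smul_one (by linarith))
  filter_upwards [eventually_add_smul_mem_Icc hH hδ (by rwa [← two_mul]) hSR'] with t ht
  simpa using hmax ht

lemma one_le_of_eq_self {S : Matrix (Fin q) (Fin q) ℝ} (hS : S.PosSemidef) (hc' : 0 ≤ c')
    (hfix : Gmap y c' S = S) : 1 ≤ S := by
  have hQ := (CFC.sqrt_nonneg S).posSemidef.isHermitian
  have hQMQ := (posSemidef_scatter y hS).mul_mul_conjTranspose_same (CFC.sqrt S)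
  rw [hQ.eq] at hQMQ
  rw [← hfix, eq_one_add_sqrt_mul_scatter_mul_sqrt y c' hS]
  exact le_add_of_nonneg_right (smul_nonneg hc' hQMQ.nonneg)

lemma trace_eq_of_eq_self {S : Matrix (Fin q) (Fin q) ℝ} (hS : S.PosDef) (hy : ∀ i, y i ≠ 0)
    (hfix : Gmap y c' S = S) : S.trace = q + c' * n := by
  have hQQ : CFC.sqrt S * CFC.sqrt S = S := CFC.sqrt_mul_sqrt_self S hS.posSemidef.nonneg
  have hP (i : Fin n) : y i ⬝ᵥ S *ᵥ y i ≠ 0 := by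
    simpa using (hS.dotProduct_mulVec_pos (hy i)).ne'
  conv_lhs => rw [← hfix, eq_one_add_sqrt_mul_scatter_mul_sqrt y c' hS.posSemidef]
  rw [trace_add, trace_one, trace_smul, trace_mul_cycle, hQQ, trace_mul_comm, scatter,
    trace_Ymat_mul_diagonal_mul_transpose_mul]
  simp [inv_mul_cancel₀ (hP _)]

end Gmap

/-- If the `yᵢ` are nonzero, `c' > 0`, and `μ > 1 + c'·n`, the map `G` has a fixed point
in `D = {S symmetric : I ⪯ S ⪯ μI}`. -/
theorem Gmap_exists_fixedPoint {q n : ℕ}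
    (y : Fin n → (Fin q → ℝ)) (hy : ∀ i, y i ≠ 0)
    {c' : ℝ} (hc' : 0 < c') {μ : ℝ} (hμ : 1 + c' * n < μ) :
    ∃ S : Matrix (Fin q) (Fin q) ℝ, S.IsHermitian ∧ loewnerLE 1 S ∧ loewnerLE S (μ • 1) ∧
      Gmap y c' S = S := by
  obtain ⟨S, hS, hmax⟩ := Gmap.exists_posDef_isLocalMax_potential y c' hc'.le hy
  have hfix : Gmap y c' S = S := Gmap.eq_self_of_potentialGrad_eq_zero y c' hS
    (Gmap.potentialGrad_eq_zero_of_isLocalMax y c' hS hy hmax)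
  have h1S : 1 ≤ S := Gmap.one_le_of_eq_self y c' hS.posSemidef hc'.le hfix
  have hSμ : S ≤ μ • 1 :=
    calc S ≤ (S.trace - q + 1) • 1 := by simpa using hS.1.le_smul_one_of_one_le h1S
      _ = (1 + c' * n) • 1 := by rw [Gmap.trace_eq_of_eq_self y c' hS hy hfix]; congr 1; ring
      _ ≤ μ • 1 := smul_one_le_smul_one hμ.le
  exact ⟨S, hS.1, Matrix.le_iff.mp h1S, Matrix.le_iff.mp hSμ, hfix⟩
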